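/- If p₁, …, p_K ∈ [0,1] are valid p-values (each stochastically larger than uniform under the null, i.e., P(pₖ ≤ t) ≤ t for all t) and K is odd, then p_agg := min(1, median(2p₁, …, 2p_K)) satisfies P(p_agg ≤ t) ≤ t for all t ∈ [0,1]; namely, since median(p₁,…,p_K) ≤ t/2 implies |{k : pₖ ≤ t/2}| ≥ K/2, Markov's inequality on this count gives P(median(p₁,…,p_K) ≤ t/2) ≤ (2/K)∑ₖ P(pₖ ≤ t/2) ≤ 2·(t/2) = t. -/

import Mathlib

open MeasureTheory

/-- The median of `K` reals: the `⌈K/2⌉`-th smallest element, characterized as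
the least `c` such that at least half of the values are `≤ c`. -/
noncomputable def finMedian {K : ℕ} (v : Fin K → ℝ) : ℝ :=
  sInf {c : ℝ | (K : ℝ) ≤ 2 * (Finset.univ.filter fun k => v k ≤ c).card}

lemma med_count {K : ℕ} (hK1 : 1 ≤ K) (v : Fin K → ℝ) (t : ℝ)
    (h : finMedian v ≤ t) :
    (K : ℝ) ≤ 2 * (Finset.univ.filter fun k => v k ≤ t).card := by
  by_contra hcon
  push_neg at hcon
  set S := {c : ℝ | (K : ℝ) ≤ 2 * (Finset.univ.filter fun k => v k ≤ c).card} with hS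
  have hKpos : 0 < K := hK1
  have hKR : (1:ℝ) ≤ (K:ℝ) := by exact_mod_cast hK1
  obtain ⟨M, hM⟩ : ∃ M, ∀ k, v k ≤ M :=
    ⟨Finset.univ.sup' ⟨⟨0, hKpos⟩, Finset.mem_univ _⟩ v,
      fun k => Finset.le_sup' v (Finset.mem_univ k)⟩
  have hMS : M ∈ S := by
    have hfil : (Finset.univ.filter fun k => v k ≤ M) = Finset.univ := by
      ext k; simp [hM k]
    simp only [hS, Set.mem_setOf_eq, hfil, Finset.card_univ, Fintype.card_fin]
    nlinarith
  have hT : (Finset.univ.filter fun k => t < v k).Nonempty := by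
    by_contra hTe
    rw [Finset.not_nonempty_iff_eq_empty, Finset.filter_eq_empty_iff] at hTe
    have hfil : (Finset.univ.filter fun k => v k ≤ t) = Finset.univ := by
      ext k; simpa using le_of_not_gt (hTe (Finset.mem_univ k))
    rw [hfil] at hcon
    simp only [Finset.card_univ, Fintype.card_fin] at hcon
    nlinarith
  set b := (Finset.univ.filter fun k => t < v k).inf' hT v with hb
  have htb : t < b := by
    rw [hb, Finset.lt_inf'_iff]
    intro k hk; exact (Finset.mem_filter.mp hk).2
  have hlow : ∀ c ∈ S, b ≤ c := by
    intro c hc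
    by_contra hbc
    push_neg at hbc
    have hsub : (Finset.univ.filter fun k => v k ≤ c) ⊆
        (Finset.univ.filter fun k => v k ≤ t) := by
      intro k hk
      rw [Finset.mem_filter] at hk ⊢
      refine ⟨hk.1, ?_⟩
      by_contra hvk
      push_neg at hvk
      have hmem : k ∈ Finset.univ.filter fun k => t < v k :=
        Finset.mem_filter.mpr ⟨Finset.mem_univ k, hvk⟩
      have := Finset.inf'_le v hmem
      linarith [hk.2]
    have hcard := Finset.card_le_card hsub
    have hcardR : ((Finset.univ.filter fun k => v k ≤ c).card : ℝ) ≤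
        ((Finset.univ.filter fun k => v k ≤ t).card : ℝ) := by exact_mod_cast hcard
    have : (K:ℝ) ≤ 2 * (Finset.univ.filter fun k => v k ≤ t).card := le_trans hc (by linarith)
    linarith
  have : b ≤ finMedian v := le_csInf ⟨M, hMS⟩ hlow
  linarith

/-- Validity of median-based p-value aggregation (Meinshausen et al. 2009): if
`p₁, …, p_K` are superuniform p-values (`P(pₖ ≤ t) ≤ t`) taking values in `[0,1]`
and `K` is odd, then `min(1, median(2p₁, …, 2p_K))` is a valid p-value. -/
theorem stmt_16 {Ω : Type*} [MeasurableSpace Ω] (μ : Measure Ω)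
    [IsProbabilityMeasure μ] (K : ℕ) (hK : Odd K) (hK1 : 1 ≤ K)
    (p : Fin K → Ω → ℝ) (hmeas : ∀ k, Measurable (p k))
    (hrange : ∀ k ω, p k ω ∈ Set.Icc (0 : ℝ) 1)
    (hsuper : ∀ k, ∀ t : ℝ, μ {ω | p k ω ≤ t} ≤ ENNReal.ofReal t) :
    ∀ t : ℝ, 0 ≤ t →
      μ {ω | min 1 (finMedian fun k => 2 * p k ω) ≤ t} ≤ ENNReal.ofReal t := by
  intro t ht
  rcases le_or_gt 1 t with h1 | h1
  · calc μ _ ≤ μ Set.univ := measure_mono (Set.subset_univ _)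
      _ = 1 := measure_univ
      _ ≤ ENNReal.ofReal t := by
          rw [← ENNReal.ofReal_one]; exact ENNReal.ofReal_le_ofReal h1
  · set f : Ω → ENNReal := fun ω =>
      ∑ k, Set.indicator {ω | p k ω ≤ t/2} (fun _ => (1:ENNReal)) ω with hf
    have hms : ∀ k : Fin K, MeasurableSet {ω | p k ω ≤ t/2} :=
      fun k => measurableSet_le (hmeas k) measurable_const
    have hfm : Measurable f :=
      Finset.measurable_sum _ fun k _ => measurable_const.indicator (hms k)
    have hfval : ∀ ω, f ω = ((Finset.univ.filter fun k => p k ω ≤ t/2).card : ENNReal) := by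
      intro ω
      rw [hf, Finset.card_filter, Nat.cast_sum]
      refine Finset.sum_congr rfl fun k _ => ?_
      by_cases h : p k ω ≤ t/2 <;> simp [Set.indicator, h]
    have hsub : {ω | min 1 (finMedian fun k => 2 * p k ω) ≤ t} ⊆
        {ω | (K:ENNReal) ≤ 2 * f ω} := by
      intro ω hω
      have hω' : min 1 (finMedian fun k => 2 * p k ω) ≤ t := hω
      have hx : finMedian (fun k => 2 * p k ω) ≤ t := by
        rcases min_le_iff.mp hω' with h | h
        · linarith
        · exact h
      have hc := med_count hK1 _ t hx
      have heq : (Finset.univ.filter fun k => 2 * p k ω ≤ t) =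
          (Finset.univ.filter fun k => p k ω ≤ t/2) := by
        apply Finset.filter_congr
        intro k _
        constructor <;> intro <;> [linarith; linarith]
      rw [heq] at hc
      have hnat : K ≤ 2 * (Finset.univ.filter fun k => p k ω ≤ t/2).card := by
        exact_mod_cast hc
      rw [Set.mem_setOf_eq, hfval]
      exact_mod_cast hnat
    have hmark : (K:ENNReal) * μ {ω | (K:ENNReal) ≤ 2 * f ω} ≤ ∫⁻ ω, 2 * f ω ∂μ :=
      mul_meas_ge_le_lintegral₀ ((hfm.const_mul 2).aemeasurable) K
    have hint : ∫⁻ ω, 2 * f ω ∂μ = 2 * ∑ k, μ {ω | p k ω ≤ t/2} := by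
      rw [lintegral_const_mul 2 hfm]
      congr 1
      rw [hf, lintegral_finset_sum _ fun k _ => measurable_const.indicator (hms k)]
      congr 1
      ext k
      rw [lintegral_indicator (hms k)]
      simp
    have hbound : ∫⁻ ω, 2 * f ω ∂μ ≤ (K:ENNReal) * ENNReal.ofReal t := by
      rw [hint]
      calc 2 * ∑ k, μ {ω | p k ω ≤ t/2}
          ≤ 2 * ∑ _k : Fin K, ENNReal.ofReal (t/2) := by
            gcongr with k
            exact hsuper k (t/2)
        _ = (K:ENNReal) * ENNReal.ofReal t := by
            have h2 : (2:ENNReal) * ENNReal.ofReal (t/2) = ENNReal.ofReal t := by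
              rw [show (2:ENNReal) = ENNReal.ofReal 2 by simp,
                ← ENNReal.ofReal_mul (by norm_num)]
              congr 1
              ring_nf
            rw [Finset.sum_const, Finset.card_univ, Fintype.card_fin, nsmul_eq_mul,
              ← mul_assoc, mul_comm (2:ENNReal) (K:ENNReal), mul_assoc, h2]
    have hfinal : μ {ω | (K:ENNReal) ≤ 2 * f ω} ≤ ENNReal.ofReal t := by
      have hKne : (K:ENNReal) ≠ 0 := Nat.cast_ne_zero.mpr (by omega)
      have hKnt : (K:ENNReal) ≠ ⊤ := ENNReal.natCast_ne_top K
      have := le_trans hmark hbound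
      exact (ENNReal.mul_le_mul_iff_right hKne hKnt).mp this
    exact le_trans (measure_mono hsub) hfinal
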